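/- Let C be a completely pseudo-regular code in a finite simple connected graph Γ, with subconstituents C_k. Then for every k and every eigenvalue λ_l, the local multiplicities satisfy m_{C_k}(λ_l) = (‖ρC‖²/‖ρC_k‖²)·p_k(λ_l)²·m_C(λ_l), where p_k is the k-th C-local predistance polynomial. -/

import Mathlib

open Finset Polynomial BigOperators
open scoped Classical

noncomputable section

/-- The eigenspace of a real matrix `A` (viewed as an operator on Euclidean space)
for the value `μ`. -/
def eigSp {n : ℕ} (A : Matrix (Fin n) (Fin n) ℝ) (μ : ℝ) :
    Submodule ℝ (EuclideanSpace ℝ (Fin n)) :=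
  Module.End.eigenspace (Matrix.toEuclideanLin A) μ

/-- Orthogonal projection onto the `μ`-eigenspace of `A`. -/
def eigProj {n : ℕ} (A : Matrix (Fin n) (Fin n) ℝ) (μ : ℝ) (v : EuclideanSpace ℝ (Fin n)) :
    EuclideanSpace ℝ (Fin n) :=
  ((eigSp A μ).orthogonalProjection v : EuclideanSpace ℝ (Fin n))

/-- The weighted characteristic vector `ρS = Σ_{i∈S} ν_i e_i`. -/
def rho {n : ℕ} (ν : EuclideanSpace ℝ (Fin n)) (S : Finset (Fin n)) :
    EuclideanSpace ℝ (Fin n) :=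
  WithLp.toLp 2 (fun i => if i ∈ S then ν i else 0)

/-- The unit vector `e_S = ρS / ‖ρS‖`. -/
def unitVec {n : ℕ} (ν : EuclideanSpace ℝ (Fin n)) (S : Finset (Fin n)) :
    EuclideanSpace ℝ (Fin n) :=
  (‖rho ν S‖)⁻¹ • rho ν S

/-- The `S`-local multiplicity of `μ`: `m_S(μ) = ‖E_μ e_S‖²`. -/
def mloc {n : ℕ} (A : Matrix (Fin n) (Fin n) ℝ) (ν : EuclideanSpace ℝ (Fin n))
    (S : Finset (Fin n)) (μ : ℝ) : ℝ :=
  ‖eigProj A μ (unitVec ν S)‖ ^ 2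

/-- The `S`-local spectrum: the set of `μ` whose eigenspace sees `ρS`. -/
def evloc {n : ℕ} (A : Matrix (Fin n) (Fin n) ℝ) (ν : EuclideanSpace ℝ (Fin n))
    (S : Finset (Fin n)) : Set ℝ :=
  {μ | eigProj A μ (rho ν S) ≠ 0}

/-- Distance from a vertex `i` to a set of vertices `S`. -/
def dSet {n : ℕ} (G : SimpleGraph (Fin n)) (S : Finset (Fin n)) (i : Fin n) : ℕ :=
  sInf {k | ∃ j ∈ S, G.dist i j = k}

/-- Eccentricity (covering radius) of a vertex set `S`. -/
def eccS {n : ℕ} (G : SimpleGraph (Fin n)) (S : Finset (Fin n)) : ℕ :=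
  Finset.univ.sup (dSet G S)

/-- The `k`-th subconstituent `S_k = {i : dist(i,S) = k}`. -/
def subcons {n : ℕ} (G : SimpleGraph (Fin n)) (S : Finset (Fin n)) (k : ℕ) :
    Finset (Fin n) :=
  Finset.univ.filter (fun i => dSet G S i = k)

/-- `p(A)·v` for a polynomial `p`, a matrix `A` and a Euclidean vector `v`. -/
def aevalVec {n : ℕ} (A : Matrix (Fin n) (Fin n) ℝ) (p : Polynomial ℝ)
    (v : EuclideanSpace ℝ (Fin n)) : EuclideanSpace ℝ (Fin n) :=
  WithLp.toLp 2 ((Polynomial.aeval A p).mulVec v)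

/-- Moment-like parameter `π_l = ∏_{h≠l} |μ_l − μ_h|` for an enumeration `μ`. -/
def piC {d : ℕ} (μ : Fin (d + 1) → ℝ) (l : Fin (d + 1)) : ℝ :=
  ∏ h ∈ Finset.univ.erase l, |μ l - μ h|

/-!
`A` is symmetric, so the orthogonal projection `E_λ` onto its `λ`-eigenspace satisfies
`E_λ A = λ E_λ`, hence `E_λ p(A) = p(λ) E_λ` for every polynomial `p`. Applied to
`ρC_k = p_k(A) ρC` this gives `E_λ ρC_k = p_k(λ) E_λ ρC`; take squared norms and divide by
`‖ρC_k‖²`. When `ρC = 0` both sides vanish.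
-/

open Module.End

namespace LinearMap.IsSymmetric

variable {𝕜 E : Type*} [RCLike 𝕜] [NormedAddCommGroup E] [InnerProductSpace 𝕜 E]
  {T : E →ₗ[𝕜] E}

theorem starProjection_eigenspace_apply (hT : T.IsSymmetric) (μ : 𝕜)
    [(eigenspace T μ).HasOrthogonalProjection] (v : E) :
    (eigenspace T μ).starProjection (T v) = μ • (eigenspace T μ).starProjection v := by
  set K := eigenspace T μ
  have hPv : K.starProjection v ∈ K := K.starProjection_apply_mem v
  refine K.eq_starProjection_of_mem_orthogonal' (K.smul_mem μ hPv)
    (hT.invariant_orthogonalComplement_eigenspace μ _ (K.sub_starProjection_mem_orthogonal v)) ?_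
  rw [map_sub, ← mem_eigenspace_iff.mp hPv]
  abel

theorem starProjection_eigenspace_pow_apply (hT : T.IsSymmetric) (μ : 𝕜)
    [(eigenspace T μ).HasOrthogonalProjection] (m : ℕ) (v : E) :
    (eigenspace T μ).starProjection ((T ^ m) v) = μ ^ m • (eigenspace T μ).starProjection v := by
  induction m with
  | zero => simp
  | succ m ih =>
    rw [pow_succ', mul_apply, hT.starProjection_eigenspace_apply, ih, smul_smul, pow_succ']

theorem starProjection_eigenspace_aeval_apply (hT : T.IsSymmetric) (μ : 𝕜)
    [(eigenspace T μ).HasOrthogonalProjection] (q : 𝕜[X]) (v : E) :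
    (eigenspace T μ).starProjection (aeval T q v) = q.eval μ • (eigenspace T μ).starProjection v := by
  induction q using Polynomial.induction_on' with
  | add q r hq hr => simp only [map_add, LinearMap.add_apply, hq, hr, eval_add, add_smul]
  | monomial m a =>
    rw [aeval_monomial, mul_apply, Module.algebraMap_end_apply, map_smul,
      hT.starProjection_eigenspace_pow_apply, eval_monomial, smul_smul]

end LinearMap.IsSymmetric

lemma aevalVec_eq_aeval_toEuclideanLin {n : ℕ} (A : Matrix (Fin n) (Fin n) ℝ) (q : ℝ[X])
    (v : EuclideanSpace ℝ (Fin n)) :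
    aevalVec A q v = aeval (Matrix.toEuclideanLin A) q v := by
  rw [show Matrix.toEuclideanLin A = Matrix.toLpLinAlgEquiv 2 A from rfl, aeval_algHom_apply]
  rfl

lemma eigProj_aevalVec {n : ℕ} {A : Matrix (Fin n) (Fin n) ℝ} (hA : A.IsHermitian) (μ : ℝ)
    (q : ℝ[X]) (v : EuclideanSpace ℝ (Fin n)) :
    eigProj A μ (aevalVec A q v) = q.eval μ • eigProj A μ v := by
  rw [aevalVec_eq_aeval_toEuclideanLin]
  exact (Matrix.isSymmetric_toEuclideanLin_iff.mpr hA).starProjection_eigenspace_aeval_apply μ q v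

lemma mloc_eq_div {n : ℕ} (A : Matrix (Fin n) (Fin n) ℝ) (ν : EuclideanSpace ℝ (Fin n))
    (S : Finset (Fin n)) (μ : ℝ) :
    mloc A ν S μ = ‖eigProj A μ (rho ν S)‖ ^ 2 / ‖rho ν S‖ ^ 2 := by
  simp [mloc, unitVec, eigProj, norm_smul, div_eq_inv_mul, mul_pow]

theorem subconstituent_multiplicities_general {n : ℕ} (G : SimpleGraph (Fin n)) [DecidableRel G.Adj]
    (ν : EuclideanSpace ℝ (Fin n))
    (C : Finset (Fin n))
    (p : ℕ → Polynomial ℝ)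
    (hcode : ∀ k ≤ eccS G C, rho ν (subcons G C k) = aevalVec (G.adjMatrix ℝ) (p k) (rho ν C)) :
    ∀ k ≤ eccS G C,
      ∀ μ' : ℝ, Module.End.HasEigenvalue (Matrix.toEuclideanLin (G.adjMatrix ℝ)) μ' →
        mloc (G.adjMatrix ℝ) ν (subcons G C k) μ'
          = ‖rho ν C‖ ^ 2 / ‖rho ν (subcons G C k)‖ ^ 2 *
              ((p k).eval μ') ^ 2 * mloc (G.adjMatrix ℝ) ν C μ' := by
  intro k hk μ _
  have hproj : eigProj (G.adjMatrix ℝ) μ (rho ν (subcons G C k))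
      = (p k).eval μ • eigProj (G.adjMatrix ℝ) μ (rho ν C) := by
    rw [hcode k hk, eigProj_aevalVec (G.isHermitian_adjMatrix ℝ)]
  rw [mloc_eq_div, mloc_eq_div, hproj, norm_smul, Real.norm_eq_abs, mul_pow, sq_abs]
  rcases eq_or_ne (rho ν C) 0 with hC | hC
  · simp [hC, eigProj]
  · field_simp

theorem subconstituent_multiplicities {n : ℕ} (hn : 0 < n) (G : SimpleGraph (Fin n)) [DecidableRel G.Adj]
    (hconn : G.Connected)
    (ν : EuclideanSpace ℝ (Fin n)) (hν : ∀ i, 0 < ν i) (lam0 : ℝ)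
    (hPerron : (G.adjMatrix ℝ).mulVec ν = lam0 • ν)
    (C : Finset (Fin n)) (hC : C.Nonempty)
    (d : ℕ) (hd : d + 1 = (evloc (G.adjMatrix ℝ) ν C).ncard)
    (p : ℕ → Polynomial ℝ)
    (hdeg : ∀ k ≤ d, (p k).natDegree = k)
    (horth : ∀ k ≤ d, ∀ h ≤ d, k ≠ h →
      (inner ℝ (aevalVec (G.adjMatrix ℝ) (p k) (unitVec ν C))
             (aevalVec (G.adjMatrix ℝ) (p h) (unitVec ν C)) : ℝ) = 0)
    (hnorm : ∀ k ≤ d,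
      (inner ℝ (aevalVec (G.adjMatrix ℝ) (p k) (unitVec ν C))
             (aevalVec (G.adjMatrix ℝ) (p k) (unitVec ν C)) : ℝ) = (p k).eval lam0)
    (hcode : ∀ k ≤ eccS G C, rho ν (subcons G C k) = aevalVec (G.adjMatrix ℝ) (p k) (rho ν C)) :
    ∀ k ≤ eccS G C,
      ∀ μ' : ℝ, Module.End.HasEigenvalue (Matrix.toEuclideanLin (G.adjMatrix ℝ)) μ' →
        mloc (G.adjMatrix ℝ) ν (subcons G C k) μ'
          = ‖rho ν C‖ ^ 2 / ‖rho ν (subcons G C k)‖ ^ 2 *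
              ((p k).eval μ') ^ 2 * mloc (G.adjMatrix ℝ) ν C μ' :=
  subconstituent_multiplicities_general G ν C p hcode
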